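/- arXiv:2310.15732 — 5 statements merged into one kernel-verified Lean document; each statement's English description precedes it below -/
import Mathlib

section
/- Assume p ≥ 1 and that B is p-adically separated, i.e. the only element b ∈ B with p^n ∣ b for every natural number n is b = 0. If x ∈ M admits a p^n-th root in M for every n ≥ 1 (that is, for each n there exists y ∈ M with y^(p^n) = x), then δ(x) = 0. -/
/-!
Iterating `δ (x * y) = δ x + δ y + p δ x δ y` gives `δ (z ^ p) = p δ z (1 + δ z c)`, so
`p δ z ∣ δ (z ^ p)`, and by induction `p ^ n ∣ δ (w ^ p ^ n)`. If `x` has a `p ^ n`-th root for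
every `n`, then `δ x` is divisible by every power of `p`, hence zero by separatedness.
-/

section LogDelta

variable {M B : Type*} [CommMonoid M] [CommRing B] {p : ℕ} {δ : M → B}
  (hδ : ∀ x y : M, δ (x * y) = δ x + δ y + (p : B) * δ x * δ y)
include hδ

theorem exists_map_pow_succ_eq (z : M) (k : ℕ) :
    ∃ c : B, δ (z ^ (k + 1)) = δ z * ((k + 1 : ℕ) + (p : B) * δ z * c) := by
  induction k with
  | zero => exact ⟨0, by simp⟩
  | succ k ih =>
    obtain ⟨c, hc⟩ := ih
    refine ⟨c + (k + 1 : ℕ) + (p : B) * δ z * c, ?_⟩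
    rw [pow_succ, hδ, hc]
    push_cast
    ring

theorem mul_map_dvd_map_pow (hp : 1 ≤ p) (z : M) : (p : B) * δ z ∣ δ (z ^ p) := by
  obtain ⟨k, rfl⟩ := Nat.exists_eq_add_of_le' hp
  obtain ⟨c, hc⟩ := exists_map_pow_succ_eq hδ z k
  exact ⟨1 + δ z * c, by rw [hc]; ring⟩

theorem pow_dvd_map_pow_pow (hp : 1 ≤ p) (w : M) (n : ℕ) : (p : B) ^ n ∣ δ (w ^ p ^ n) := by
  induction n with
  | zero => simp
  | succ n ih =>
    rw [pow_succ, pow_succ, pow_mul, mul_comm]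
    exact (mul_dvd_mul_left _ ih).trans (mul_map_dvd_map_pow hδ hp _)

end LogDelta

/-- Assume `p ≥ 1` and that `B` is `p`-adically separated. If `x ∈ M` admits a
`p^n`-th root in `M` for every `n ≥ 1`, then `δ(x) = 0`, where `δ : M → B`
satisfies the multiplicativity axiom of the `δ_log`-structure of a log-prism. -/
theorem stmt_2 {M B : Type*} [CommMonoid M] [CommRing B] (p : ℕ) (hp : 1 ≤ p) (δ : M → B)
    (hδ : ∀ x y : M, δ (x * y) = δ x + δ y + (p : B) * δ x * δ y)
    (hsep : ∀ b : B, (∀ n : ℕ, (p : B) ^ n ∣ b) → b = 0)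
    (x : M) (hx : ∀ n : ℕ, 1 ≤ n → ∃ y : M, y ^ (p ^ n) = x) :
    δ x = 0 := by
  refine hsep _ fun n => ?_
  rcases Nat.eq_zero_or_pos n with rfl | hn
  · simp
  · obtain ⟨y, rfl⟩ := hx n hn
    exact pow_dvd_map_pow_pow hδ hp y n
end

section
/- Let G be a torsion-free additive abelian group, let Q be an additive submonoid of G that generates G as a group, and assume Q is saturated in G (for all g ∈ G and n ≥ 1, if n•g ∈ Q then g ∈ Q). Let f : ℚ≥0 → G be an injective additive monoid homomorphism with image contained in Q, and assume f is Kummer, i.e. for every q ∈ Q there exists n ≥ 1 with n•q in the image of f. Then there is an additive group isomorphism F : ℚ ≃ G extending f, and either Q equals the image of f (that is, F(ℚ≥0)) or Q = G. -/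
open scoped NNRat

/-! The extension `F` of `f` is `x ↦ f x⁺ - f x⁻`. It is injective because `f` is, and its range
contains `Q`, since `G` is torsion-free and `ℚ` is divisible; as `Q` generates `G`, `F` is onto.
Pulled back along `F`, `Q` becomes a submonoid of `ℚ` containing `ℚ≥0`, and by the Archimedean
property such a submonoid is either `ℚ≥0` or, as soon as it contains a negative number, all of `ℚ`. -/

lemma Rat.coe_toNNRat_sub_coe_toNNRat_neg (x : ℚ) :
    (x.toNNRat : ℚ) - ((-x).toNNRat : ℚ) = x := by
  rcases le_total 0 x with h | h
  · rw [Rat.coe_toNNRat _ h, Rat.toNNRat_eq_zero.2 (neg_nonpos.2 h)]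
    simp
  · rw [Rat.coe_toNNRat _ (neg_nonneg.2 h), Rat.toNNRat_eq_zero.2 h]
    simp

namespace AddMonoidHom

variable {G : Type*} [AddCommGroup G]

lemma map_sub_map_eq_of_coe_sub_eq (f : ℚ≥0 →+ G) {s t u v : ℚ≥0}
    (h : (s : ℚ) - t = u - v) : f s - f t = f u - f v := by
  have hsum : s + v = u + t := by
    rw [← NNRat.coe_inj]
    push_cast
    linarith
  rw [sub_eq_sub_iff_add_eq_add, ← map_add, ← map_add, hsum]

def extendToRat (f : ℚ≥0 →+ G) : ℚ →+ G where
  toFun x := f x.toNNRat - f (-x).toNNRat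
  map_zero' := by simp
  map_add' a b := by
    have h := f.map_sub_map_eq_of_coe_sub_eq
      (s := (a + b).toNNRat) (t := (-(a + b)).toNNRat)
      (u := a.toNNRat + b.toNNRat) (v := (-a).toNNRat + (-b).toNNRat) (by
        push_cast
        linarith [a.coe_toNNRat_sub_coe_toNNRat_neg, b.coe_toNNRat_sub_coe_toNNRat_neg,
          (a + b).coe_toNNRat_sub_coe_toNNRat_neg])
    rw [h, map_add, map_add]
    abel

lemma extendToRat_coe (f : ℚ≥0 →+ G) (q : ℚ≥0) : f.extendToRat q = f q := by
  change f _ - f _ = f q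
  rw [NNRat.toNNRat_coe, (Rat.toNNRat_eq_zero (q := -q)).2 (neg_nonpos.2 q.2), map_zero, sub_zero]

lemma image_Ici_zero_extendToRat (f : ℚ≥0 →+ G) : f.extendToRat '' Set.Ici 0 = Set.range f := by
  ext g
  constructor
  · rintro ⟨x, hx, rfl⟩
    exact ⟨x.toNNRat, by rw [← extendToRat_coe, Rat.coe_toNNRat x hx]⟩
  · rintro ⟨q, rfl⟩
    exact ⟨q, q.2, f.extendToRat_coe q⟩

lemma extendToRat_injective {f : ℚ≥0 →+ G} (hf : Function.Injective f) :
    Function.Injective f.extendToRat := by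
  refine (injective_iff_map_eq_zero _).2 fun x hx ↦ ?_
  have hparts : x.toNNRat = (-x).toNNRat := hf (sub_eq_zero.1 hx)
  rw [← x.coe_toNNRat_sub_coe_toNNRat_neg, hparts, sub_self]

lemma mem_range_of_nsmul_mem_range [IsAddTorsionFree G] {V : Type*} [AddCommGroup V]
    [Module ℚ V] (F : V →+ G) {n : ℕ} (hn : n ≠ 0) {g : G} (h : n • g ∈ F.range) :
    g ∈ F.range := by
  obtain ⟨x, hx⟩ := h
  refine ⟨(n⁻¹ : ℚ) • x, nsmul_right_injective hn ?_⟩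
  simp only [← map_nsmul, ← Nat.cast_smul_eq_nsmul ℚ, smul_smul]
  rw [mul_inv_cancel₀ (Nat.cast_ne_zero.2 hn), one_smul, hx]

end AddMonoidHom

lemma AddSubmonoid.eq_Ici_zero_or_eq_top {α : Type*} [AddCommGroup α] [LinearOrder α]
    [IsOrderedAddMonoid α] [Archimedean α] (S : AddSubmonoid α) (hS : Set.Ici (0 : α) ⊆ S) :
    (S : Set α) = Set.Ici 0 ∨ S = ⊤ := by
  by_cases hnonneg : ∀ x ∈ S, 0 ≤ x
  · exact Or.inl (hS.antisymm' hnonneg)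
  obtain ⟨x₀, hx₀S, hx₀⟩ : ∃ x₀ ∈ S, x₀ < 0 := by simpa using hnonneg
  refine Or.inr ((eq_top_iff' S).2 fun y ↦ ?_)
  obtain ⟨m, hm⟩ := Archimedean.arch (-y) (neg_pos.2 hx₀)
  have hrest : y - m • x₀ ∈ S := hS (by
    rw [smul_neg] at hm
    exact sub_nonneg.2 (neg_le_neg_iff.1 hm))
  simpa using S.add_mem hrest (S.nsmul_mem hx₀S m)

theorem stmt_5_general {G : Type*} [AddCommGroup G]
    (htf : ∀ (n : ℕ) (g : G), 1 ≤ n → n • g = 0 → g = 0)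
    (Q : AddSubmonoid G)
    (hgen : AddSubgroup.closure (Q : Set G) = ⊤)
    (f : ℚ≥0 →+ G) (hinj : Function.Injective f)
    (him : ∀ q : ℚ≥0, f q ∈ Q)
    (hKum : ∀ q ∈ Q, ∃ n : ℕ, 1 ≤ n ∧ n • q ∈ Set.range f) :
    ∃ F : ℚ ≃+ G, (∀ q : ℚ≥0, F (q : ℚ) = f q) ∧
      ((Q : Set G) = Set.range f ∨ Q = ⊤) := by
  have : IsAddTorsionFree G := ⟨fun n hn a b hab ↦ sub_eq_zero.1 <|
    htf n _ (Nat.one_le_iff_ne_zero.2 hn) (by rw [nsmul_sub]; exact sub_eq_zero.2 hab)⟩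
  have hQ : (Q : Set G) ⊆ f.extendToRat.range := fun q hq ↦ by
    obtain ⟨n, hn, r, hr⟩ := hKum q hq
    exact f.extendToRat.mem_range_of_nsmul_mem_range (Nat.one_le_iff_ne_zero.1 hn)
      ⟨r, by rw [f.extendToRat_coe, hr]⟩
  have hsurj : Function.Surjective f.extendToRat := AddMonoidHom.range_eq_top.1 <|
    top_le_iff.1 (hgen ▸ (AddSubgroup.closure_le _).2 hQ)
  refine ⟨.ofBijective _ ⟨AddMonoidHom.extendToRat_injective hinj, hsurj⟩,
    f.extendToRat_coe, ?_⟩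
  rw [← AddSubmonoid.map_comap_eq_of_surjective hsurj Q, AddSubmonoid.coe_map]
  have hpos : Set.Ici 0 ⊆ (Q.comap f.extendToRat : Set ℚ) := by
    rw [AddSubmonoid.coe_comap, ← Set.image_subset_iff, f.image_Ici_zero_extendToRat]
    exact Set.range_subset_iff.2 him
  rcases (Q.comap f.extendToRat).eq_Ici_zero_or_eq_top hpos with h | h
  · exact Or.inl (h ▸ f.image_Ici_zero_extendToRat)
  · right
    rw [h, ← AddMonoidHom.mrange_eq_map, AddMonoidHom.mrange_eq_top.2 hsurj]

/-- Let `G` be a torsion-free abelian group, `Q` a saturated submonoid of `G`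
generating `G` as a group, and `f : ℚ≥0 → G` an injective Kummer additive monoid
homomorphism with image contained in `Q`. Then `f` extends to a group isomorphism
`F : ℚ ≃ G`, and either `Q` is the image of `f` or `Q = G`. -/
theorem stmt_5 {G : Type*} [AddCommGroup G]
    (htf : ∀ (n : ℕ) (g : G), 1 ≤ n → n • g = 0 → g = 0)
    (Q : AddSubmonoid G)
    (hgen : AddSubgroup.closure (Q : Set G) = ⊤)
    (hsat : ∀ (g : G) (n : ℕ), 1 ≤ n → n • g ∈ Q → g ∈ Q)
    (f : ℚ≥0 →+ G) (hinj : Function.Injective f)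
    (him : ∀ q : ℚ≥0, f q ∈ Q)
    (hKum : ∀ q ∈ Q, ∃ n : ℕ, 1 ≤ n ∧ n • q ∈ Set.range f) :
    ∃ F : ℚ ≃+ G, (∀ q : ℚ≥0, F (q : ℚ) = f q) ∧
      ((Q : Set G) = Set.range f ∨ Q = ⊤) :=
  stmt_5_general htf Q hgen f hinj him hKum
end

section
/- The element x = (1/3 mod ℤ, 0) of (ℚ/ℤ) × ℚ satisfies 3•x ∈ P but x ∉ P. In particular, the monoid P is not saturated in (ℚ/ℤ) × ℚ. -/
/-! The second coordinate of `φ(a, b)` bounds `a` from above, so `(x, q) ∈ P` forces `x` to be the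
class of some `a ∈ [0, q]`. For `x = 1/3 mod ℤ` and `q = 0` this leaves only `a = 0`, while
`3 • x = (1 mod ℤ, 0) = φ(0, 0)`. -/

/-- The subgroup `ℤ` of `ℚ`. -/
def ZinQ : AddSubgroup ℚ := AddSubgroup.zmultiples (1 : ℚ)

/-- The quotient group `ℚ/ℤ`. -/
abbrev QmodZ : Type := ℚ ⧸ ZinQ

/-- The quotient map `ℚ → ℚ/ℤ`, `a ↦ a mod ℤ`. -/
def qmodZmk : ℚ →+ QmodZ := QuotientAddGroup.mk' ZinQ

/-- The homomorphism `φ : ℚ × ℚ → (ℚ/ℤ) × ℚ`, `(a,b) ↦ (a mod ℤ, a + b)`. -/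
def phiQ : ℚ × ℚ →+ QmodZ × ℚ :=
  (qmodZmk.comp (AddMonoidHom.fst ℚ ℚ)).prod
    (AddMonoidHom.fst ℚ ℚ + AddMonoidHom.snd ℚ ℚ)

/-- The submonoid `ℚ≥0 × ℚ≥0` of `ℚ × ℚ`. -/
def nonnegPairs : AddSubmonoid (ℚ × ℚ) where
  carrier := {ab | 0 ≤ ab.1 ∧ 0 ≤ ab.2}
  zero_mem' := ⟨le_refl 0, le_refl 0⟩
  add_mem' := fun ha hb => ⟨add_nonneg ha.1 hb.1, add_nonneg ha.2 hb.2⟩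

/-- The monoid `P = ℚ≥0 ⊕_ℕ ℚ≥0`, presented as the image of `ℚ≥0 × ℚ≥0`
inside the group completion `(ℚ/ℤ) × ℚ`. -/
def Pmon : AddSubmonoid (QmodZ × ℚ) := nonnegPairs.map phiQ

theorem mem_Pmon_iff {x : QmodZ} {q : ℚ} :
    (x, q) ∈ Pmon ↔ ∃ a : ℚ, 0 ≤ a ∧ a ≤ q ∧ qmodZmk a = x := by
  constructor
  · rintro ⟨⟨a, b⟩, ⟨ha, hb⟩, hab⟩
    obtain ⟨hx, hq⟩ := Prod.ext_iff.mp hab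
    have hq : a + b = q := hq
    exact ⟨a, ha, by linarith, hx⟩
  · rintro ⟨a, ha, haq, rfl⟩
    exact ⟨(a, q - a), ⟨ha, sub_nonneg.mpr haq⟩, by simp [phiQ, qmodZmk]⟩

theorem qmodZmk_eq_zero_iff {a : ℚ} : qmodZmk a = 0 ↔ ∃ k : ℤ, (k : ℚ) = a := by
  rw [qmodZmk, QuotientAddGroup.mk'_apply, QuotientAddGroup.eq_zero_iff, ZinQ,
    AddSubgroup.mem_zmultiples_iff]
  simp

theorem nsmul_qmodZmk_one_div_self {n : ℕ} (hn : n ≠ 0) : n • qmodZmk (1 / n) = 0 := by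
  rw [← map_nsmul, nsmul_eq_mul, mul_one_div_cancel (Nat.cast_ne_zero.mpr hn)]
  exact qmodZmk_eq_zero_iff.mpr ⟨1, by simp⟩

theorem qmodZmk_one_div_ne_zero {n : ℕ} (hn : 2 ≤ n) : qmodZmk (1 / n) ≠ 0 := by
  rintro h
  obtain ⟨k, hk⟩ := qmodZmk_eq_zero_iff.mp h
  have : (n : ℤ) * k = 1 := by
    rw [← Int.cast_inj (α := ℚ)]
    push_cast
    rw [hk]
    field_simp
  have := Int.eq_one_of_mul_eq_one_right (by positivity) this
  omega

theorem nsmul_one_div_mem_Pmon {n : ℕ} (hn : n ≠ 0) :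
    n • ((qmodZmk (1 / n), 0) : QmodZ × ℚ) ∈ Pmon := by
  rw [Prod.smul_mk, nsmul_qmodZmk_one_div_self hn, smul_zero, mem_Pmon_iff]
  exact ⟨0, le_rfl, le_rfl, map_zero _⟩

theorem one_div_notMem_Pmon {n : ℕ} (hn : 2 ≤ n) :
    ((qmodZmk (1 / n), 0) : QmodZ × ℚ) ∉ Pmon := by
  rintro hx
  obtain ⟨a, ha, ha', hax⟩ := mem_Pmon_iff.mp hx
  obtain rfl : a = 0 := le_antisymm ha' ha
  exact qmodZmk_one_div_ne_zero hn (hax.symm.trans (map_zero _))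

/-- The element `x = (1/3 mod ℤ, 0)` of `(ℚ/ℤ) × ℚ` satisfies `3•x ∈ P` but
`x ∉ P`; in particular `P` is not saturated in `(ℚ/ℤ) × ℚ`. -/
theorem stmt_7 :
    (3 : ℕ) • ((qmodZmk (1/3), 0) : QmodZ × ℚ) ∈ Pmon ∧
      ((qmodZmk (1/3), 0) : QmodZ × ℚ) ∉ Pmon ∧
      ¬ (∀ (g : QmodZ × ℚ) (n : ℕ), 1 ≤ n → n • g ∈ Pmon → g ∈ Pmon) := by
  have hmem : (3 : ℕ) • ((qmodZmk (1/3), 0) : QmodZ × ℚ) ∈ Pmon := by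
    exact_mod_cast nsmul_one_div_mem_Pmon (n := 3) (by norm_num)
  have hnot : ((qmodZmk (1/3), 0) : QmodZ × ℚ) ∉ Pmon := by
    exact_mod_cast one_div_notMem_Pmon (n := 3) (by norm_num)
  exact ⟨hmem, hnot, fun hsat => hnot (hsat _ 3 (by norm_num) hmem)⟩
end

section
/- The saturation of P inside (ℚ/ℤ) × ℚ, namely the set {x ∈ (ℚ/ℤ) × ℚ : there exists an integer m ≥ 1 with m•x ∈ P}, is equal to (ℚ/ℤ) × {q ∈ ℚ : 0 ≤ q}. -/
/-!
Every element of `P` has nonnegative second coordinate, and multiplying by `m ≥ 1` preserves the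
sign, so the saturation lies in `(ℚ/ℤ) × ℚ≥0`. Conversely `ℚ/ℤ` is torsion: if `m • t = 0` then
`m • (t, s) = φ(0, m s)`, which lies in `P` whenever `s ≥ 0`.
-/

theorem nsmul_den_qmodZmk (q : ℚ) : q.den • qmodZmk q = 0 := by
  rw [← map_nsmul, qmodZmk, QuotientAddGroup.mk'_apply, QuotientAddGroup.eq_zero_iff,
    nsmul_eq_mul, mul_comm, Rat.mul_den_eq_num]
  exact AddSubgroup.intCast_mem_zmultiples_one q.num

theorem isAddTorsion_qmodZ : IsAddTorsion QmodZ := by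
  intro t
  obtain ⟨q, rfl⟩ := QuotientAddGroup.mk'_surjective ZinQ t
  exact isOfFinAddOrder_iff_nsmul_eq_zero.mpr ⟨q.den, q.pos, nsmul_den_qmodZmk q⟩

theorem snd_nonneg_of_mem_Pmon {x : QmodZ × ℚ} (hx : x ∈ Pmon) : 0 ≤ x.2 := by
  obtain ⟨ab, ⟨ha, hb⟩, rfl⟩ := hx
  exact add_nonneg ha hb

theorem zero_prod_mem_Pmon {s : ℚ} (hs : 0 ≤ s) : ((0 : QmodZ), s) ∈ Pmon :=
  ⟨(0, s), ⟨le_rfl, hs⟩, by simp [phiQ]⟩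

/-- The saturation of `P = ℚ≥0 ⊕_ℕ ℚ≥0` inside `(ℚ/ℤ) × ℚ` equals
`(ℚ/ℤ) × ℚ≥0`. -/
theorem stmt_8 :
    {x : QmodZ × ℚ | ∃ m : ℕ, 1 ≤ m ∧ m • x ∈ Pmon} =
      {x : QmodZ × ℚ | 0 ≤ x.2} := by
  ext ⟨t, s⟩
  simp only [Set.mem_ofPred_eq]
  constructor
  · rintro ⟨m, hm, hmx⟩
    have hms : 0 ≤ (m : ℚ) * s := by simpa using snd_nonneg_of_mem_Pmon hmx
    exact nonneg_of_mul_nonneg_right hms (by exact_mod_cast hm)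
  · intro hs
    obtain ⟨m, hm, hmt⟩ := isOfFinAddOrder_iff_nsmul_eq_zero.mp (isAddTorsion_qmodZ t)
    refine ⟨m, hm, ?_⟩
    rw [Prod.smul_mk, hmt]
    exact zero_prod_mem_Pmon (nsmul_nonneg hs m)
end

section
/- Let n ≥ 1 and let ψ : ℚ^n → (ℚ/ℤ)^(n−1) × ℚ be the additive group homomorphism sending (a_0, …, a_{n−1}) to ((a_0 mod ℤ, …, a_{n−2} mod ℤ), a_0 + ⋯ + a_{n−1}). Then ψ is surjective and its kernel is {(k_0, …, k_{n−1}) ∈ ℤ^n : k_0 + ⋯ + k_{n−1} = 0}. Consequently the n-fold amalgamated sum ℚ ⊕_ℤ ⋯ ⊕_ℤ ℚ (the quotient of ℚ^n by the subgroup of integer vectors with coordinate sum zero) is isomorphic to (ℚ/ℤ)^(n−1) × ℚ. -/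
/-- The summation homomorphism `ℚ^n → ℚ`. -/
def sumHom (n : ℕ) : (Fin n → ℚ) →+ ℚ where
  toFun a := ∑ i, a i
  map_zero' := by simp
  map_add' := by intro a b; simp [Finset.sum_add_distrib]

/-- The subgroup of `ℚ^n` consisting of integer vectors with coordinate sum zero. -/
def intSumZero (n : ℕ) : AddSubgroup (Fin n → ℚ) :=
  (AddSubgroup.pi Set.univ fun _ => AddSubgroup.zmultiples (1 : ℚ)) ⊓ (sumHom n).ker

/-!
Write `n = m + 1`. The last coordinate is free to adjust the sum, so `ψ` is surjective. In a
vector of sum zero whose first `m` coordinates are integers, the last coordinate is minus a sum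
of integers, so the kernel consists of integer vectors of sum zero.
-/

def truncModZ (m : ℕ) : (Fin (m + 1) → ℚ) →+ (Fin m → QmodZ) :=
  AddMonoidHom.pi fun i => qmodZmk.comp (Pi.evalAddMonoidHom _ i.castSucc)

def amalgamationHom (m : ℕ) : (Fin (m + 1) → ℚ) →+ (Fin m → QmodZ) × ℚ :=
  (truncModZ m).prod (sumHom (m + 1))

theorem qmodZmk_eq_zero_iff_s9 (x : ℚ) : qmodZmk x = 0 ↔ x ∈ ZinQ :=
  QuotientAddGroup.eq_zero_iff x

theorem mem_ker_truncModZ {m : ℕ} {a : Fin (m + 1) → ℚ} :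
    a ∈ (truncModZ m).ker ↔ ∀ i : Fin m, a i.castSucc ∈ ZinQ := by
  simp only [AddMonoidHom.mem_ker, funext_iff, ← qmodZmk_eq_zero_iff_s9]
  rfl

theorem mem_intSumZero_succ_iff {m : ℕ} {a : Fin (m + 1) → ℚ} :
    a ∈ intSumZero (m + 1) ↔ (∀ i : Fin m, a i.castSucc ∈ ZinQ) ∧ ∑ i, a i = 0 := by
  simp only [intSumZero, AddSubgroup.mem_inf, AddSubgroup.mem_pi, Set.mem_univ, true_implies,
    AddMonoidHom.mem_ker]
  refine ⟨fun ⟨hint, hsum⟩ => ⟨fun i => hint _, hsum⟩, fun ⟨hint, hsum⟩ => ⟨?_, hsum⟩⟩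
  have hlast : a (Fin.last m) = -∑ i : Fin m, a i.castSucc := by
    rw [Fin.sum_univ_castSucc] at hsum
    linarith
  refine Fin.lastCases ?_ hint
  rw [hlast]
  exact neg_mem (AddSubgroup.sum_mem _ fun i _ => hint i)

theorem amalgamationHom_surjective (m : ℕ) : Function.Surjective (amalgamationHom m) := by
  rintro ⟨q, s⟩
  choose r hr using fun i => QuotientAddGroup.mk'_surjective ZinQ (q i)
  refine ⟨Fin.snoc r (s - ∑ i, r i), Prod.ext (funext fun i => ?_) ?_⟩
  · simpa [amalgamationHom, truncModZ, qmodZmk] using hr i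
  · simp [amalgamationHom, sumHom, Fin.sum_univ_castSucc]

theorem ker_amalgamationHom (m : ℕ) : (amalgamationHom m).ker = intSumZero (m + 1) := by
  ext a
  rw [amalgamationHom, AddMonoidHom.ker_prod, AddSubgroup.mem_inf, mem_ker_truncModZ,
    mem_intSumZero_succ_iff]
  rfl

/-- For `n ≥ 1`, the map `ψ : ℚ^n → (ℚ/ℤ)^(n-1) × ℚ`,
`(a_0, …, a_{n-1}) ↦ ((a_0 mod ℤ, …, a_{n-2} mod ℤ), a_0 + ⋯ + a_{n-1})`, is surjective with
kernel the integer vectors of sum zero; consequently the `n`-fold amalgamated sum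
`ℚ ⊕_ℤ ⋯ ⊕_ℤ ℚ` is isomorphic to `(ℚ/ℤ)^(n-1) × ℚ`. -/
theorem stmt_9 (n : ℕ) (hn : 1 ≤ n)
    (ψ : (Fin n → ℚ) →+ (Fin (n - 1) → QmodZ) × ℚ)
    (hψ : ∀ a : Fin n → ℚ,
      ψ a = (fun i : Fin (n - 1) => qmodZmk (a (Fin.castLE (Nat.sub_le n 1) i)), ∑ i, a i)) :
    Function.Surjective ψ ∧ ψ.ker = intSumZero n ∧
      Nonempty (((Fin n → ℚ) ⧸ intSumZero n) ≃+ (Fin (n - 1) → QmodZ) × ℚ) := by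
  obtain ⟨m, rfl⟩ := Nat.exists_eq_add_of_le' hn
  obtain rfl : ψ = amalgamationHom m := AddMonoidHom.ext hψ
  refine ⟨amalgamationHom_surjective m, ker_amalgamationHom m, ⟨?_⟩⟩
  exact (QuotientAddGroup.quotientAddEquivOfEq (ker_amalgamationHom m).symm).trans
    (QuotientAddGroup.quotientKerEquivOfSurjective _ (amalgamationHom_surjective m))
end
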